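/- Let K be a real quadratic field with discriminant D. Then there exists an algebraic integer α ∈ K with K = ℚ(α) and H(α) < √D. -/

import Mathlib

/-!
The ring of integers has a `ℤ`-basis `(1, θ)`: the coordinates of `1` in any `ℤ`-basis are
coprime, since a common divisor `d` would make `1 / d` an algebraic integer. If
`θ² + tθ + n = 0`, the trace form of this basis gives `D = t² - 4n`. For an integer `k`, the
element `α = θ - k` is a root of `X² + BX + C` with `B = t + 2k` and `B² - 4C = D`, and `k` can
be chosen with `0 ≤ B` and `B² ≤ D < (B + 2)²`. As `α ∉ ℚ`, `C ≠ 0`, so `C < 0` and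
`4|C| = D - B² < 4(B + 1)`; hence `1 ≤ |C| ≤ B < √D`.
-/

open NumberField IntermediateField Polynomial

theorem Module.Basis.exists_basis_zero_eq_of_isCoprime {R M : Type*} [CommRing R] [Nontrivial R]
    [AddCommGroup M] [Module R M] (e : Basis (Fin 2) R M) {x : M}
    (hx : IsCoprime (e.repr x 0) (e.repr x 1)) : ∃ b : Basis (Fin 2) R M, b 0 = x := by
  obtain ⟨u, v, huv⟩ := hx
  have hx_eq : x = e.repr x 0 • e 0 + e.repr x 1 • e 1 :=
    (e.sum_repr x).symm.trans (Fin.sum_univ_two _)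
  generalize e.repr x 0 = a, e.repr x 1 = c at hx_eq huv
  set y := (-v) • e 0 + u • e 1
  have hx_mem : x ∈ Submodule.span R (Set.range ![x, y]) := Submodule.subset_span ⟨0, rfl⟩
  have hy_mem : y ∈ Submodule.span R (Set.range ![x, y]) := Submodule.subset_span ⟨1, rfl⟩
  have hspan : ⊤ ≤ Submodule.span R (Set.range ![x, y]) := by
    rw [← e.span_eq, Submodule.span_le, Set.range_subset_iff, Fin.forall_fin_two]
    constructor
    · have he0 : u • x + (-c) • y = e 0 := by
        rw [hx_eq]; linear_combination (norm := module) huv • e 0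
      exact he0 ▸ add_mem (Submodule.smul_mem _ _ hx_mem) (Submodule.smul_mem _ _ hy_mem)
    · have he1 : v • x + a • y = e 1 := by
        rw [hx_eq]; linear_combination (norm := module) huv • e 1
      exact he1 ▸ add_mem (Submodule.smul_mem _ _ hx_mem) (Submodule.smul_mem _ _ hy_mem)
  exact ⟨basisOfTopLeSpanOfCardEqFinrank _ hspan (by simp [finrank_eq_card_basis e]), by simp⟩

theorem Module.Basis.exists_sq_add_smul_add_smul_eq_zero {R A : Type*} [CommRing R] [Ring A]
    [Algebra R A] (b : Basis (Fin 2) R A) (hb : b 0 = 1) :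
    ∃ t n : R, b 1 ^ 2 + t • b 1 + n • 1 = 0 := by
  have hsq := (b.sum_repr (b 1 ^ 2)).symm.trans (Fin.sum_univ_two _)
  exact ⟨-b.repr (b 1 ^ 2) 1, -b.repr (b 1 ^ 2) 0, by
    rw [← hb]; linear_combination (norm := module) hsq⟩

theorem Algebra.discr_of_basis_zero_eq_one {R A : Type*} [CommRing R] [CommRing A] [Algebra R A]
    (b : Module.Basis (Fin 2) R A) (hb : b 0 = 1) {t n : R}
    (h : b 1 ^ 2 + t • b 1 + n • 1 = 0) : Algebra.discr R b = t ^ 2 - 4 * n := by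
  have hsq : b 1 * b 1 = (-n) • b 0 + (-t) • b 1 := by
    rw [hb, ← pow_two]; linear_combination (norm := module) h
  have htrace (x : A) : Algebra.trace R A x = b.repr (x * b 0) 0 + b.repr (x * b 1) 1 := by
    rw [Algebra.trace_eq_matrix_trace b, Matrix.trace_fin_two,
      Algebra.leftMulMatrix_eq_repr_mul, Algebra.leftMulMatrix_eq_repr_mul]
  have htr_one : Algebra.trace R A 1 = 2 := by
    rw [htrace, one_mul, one_mul]
    simp [one_add_one_eq_two]
  have htr : Algebra.trace R A (b 1) = -t := by
    rw [htrace, hb, mul_one, hsq]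
    simp
  have htr_sq : Algebra.trace R A (b 1 * b 1) = t ^ 2 - 2 * n := by
    rw [hsq, map_add, map_smul, map_smul, hb, htr_one, htr, smul_eq_mul, smul_eq_mul]
    ring
  rw [Algebra.discr_def, Matrix.det_fin_two]
  simp only [Algebra.traceMatrix_apply, Algebra.traceForm_apply, hb, one_mul, mul_one, htr_one,
    htr, htr_sq]
  ring

theorem IntermediateField.adjoin_simple_eq_top_of_notMem_bot {F E : Type*} [Field F] [Field E]
    [Algebra F E] (hp : (Module.finrank F E).Prime) {x : E}
    (hx : x ∉ (⊥ : IntermediateField F E)) : F⟮x⟯ = ⊤ :=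
  ((isSimpleOrder_of_finrank_prime F E hp).eq_bot_or_eq_top F⟮x⟯).resolve_left
    (hx ∘ adjoin_simple_eq_bot_iff.mp)

section Quadratic

variable {R S : Type*} [CommRing R] [CommRing S] [IsDomain S] [Algebra R S] {x : S} {b c : R}

@[simp]
theorem Polynomial.coeff_one_X_sq_add_C_mul_X_add_C : (X ^ 2 + C b * X + C c).coeff 1 = b := by
  simp [coeff_C]

@[simp]
theorem Polynomial.coeff_zero_X_sq_add_C_mul_X_add_C : (X ^ 2 + C b * X + C c).coeff 0 = c := by
  simp [coeff_C]

theorem ne_zero_of_aeval_X_sq_add_C_mul_X_add_C_eq_zero (hx : x ∉ (algebraMap R S).range)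
    (h : aeval x (X ^ 2 + C b * X + C c) = 0) : c ≠ 0 := by
  rintro rfl
  have hprod : x * (x + algebraMap R S b) = 0 := by
    simp only [map_add, map_mul, map_pow, aeval_X, aeval_C, map_zero, add_zero] at h
    linear_combination h
  rcases mul_eq_zero.mp hprod with h0 | hb
  · exact hx ⟨0, by rw [h0, map_zero]⟩
  · exact hx ⟨-b, by rw [map_neg]; linear_combination -hb⟩

theorem minpoly.eq_X_sq_add_C_mul_X_add_C [IsDomain R] [IsIntegrallyClosed R]
    [Module.IsTorsionFree R S] (hx : x ∉ (algebraMap R S).range)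
    (h : Polynomial.aeval x (X ^ 2 + C b * X + C c) = 0) :
    minpoly R x = X ^ 2 + C b * X + C c := by
  have hmonic : (X ^ 2 + C b * X + C c).Monic := by monicity!
  have hdeg : (X ^ 2 + C b * X + C c).natDegree = 2 := by compute_degree!
  have hint : IsIntegral R x := ⟨_, hmonic, h⟩
  refine (IsIntegrallyClosed.unique_of_degree_le_degree_minpoly hmonic h ?_).symm
  rw [degree_eq_natDegree hmonic.ne_zero, degree_eq_natDegree (minpoly.ne_zero hint), hdeg]
  exact_mod_cast (minpoly.two_le_natDegree_iff hint).mpr hx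

end Quadratic

theorem Int.exists_nonneg_add_two_mul_sq_le_lt (t : ℤ) {D : ℤ} (hD : 0 < D) :
    ∃ k : ℤ, 0 ≤ t + 2 * k ∧ (t + 2 * k) ^ 2 ≤ D ∧ D < (t + 2 * k + 2) ^ 2 := by
  lift D to ℕ using hD.le
  have hs_le : (D.sqrt : ℤ) ^ 2 ≤ D := by exact_mod_cast D.sqrt_le'
  have hlt_s : (D : ℤ) < (D.sqrt + 1) ^ 2 := by exact_mod_cast D.lt_succ_sqrt'
  generalize (D.sqrt : ℤ) = s at hs_le hlt_s
  have hs_pos : 0 < s := by nlinarith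
  rcases Int.even_or_odd' (s - t) with ⟨k, hk | hk⟩
  · exact ⟨k, by omega, by rw [show t + 2 * k = s by omega]; exact hs_le, by nlinarith⟩
  · refine ⟨k, by omega, ?_, ?_⟩ <;> rw [show t + 2 * k = s - 1 by omega] <;> nlinarith

theorem Int.max_one_max_abs_sq_lt {B C D : ℤ} (hB : 0 ≤ B) (hC : C ≠ 0)
    (hD : D = B ^ 2 - 4 * C) (hle : B ^ 2 ≤ D) (hlt : D < (B + 2) ^ 2) :
    max 1 (max |B| |C|) ^ 2 < D := by
  have hC_neg : C < 0 := by omega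
  have hC_le : -C ≤ B := by nlinarith
  have hmax : max 1 (max |B| |C|) = B := by
    rw [abs_of_nonneg hB, abs_of_neg hC_neg]
    omega
  rw [hmax]
  omega

namespace NumberField.RingOfIntegers

variable {K : Type*} [Field K] [CharZero K]

theorem exists_intCast_eq_of_coe_mem_bot {x : 𝓞 K}
    (hx : (x : K) ∈ (⊥ : IntermediateField ℚ K)) : ∃ z : ℤ, x = z := by
  obtain ⟨q, hq⟩ := IntermediateField.mem_bot.mp hx
  have hq_int : IsIntegral ℤ q :=
    (isIntegral_algebraMap_iff (algebraMap ℚ K).injective).mp (hq ▸ isIntegral_coe x)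
  obtain ⟨z, rfl⟩ := IsIntegrallyClosed.isIntegral_iff.mp hq_int
  exact ⟨z, coe_injective (by simp [← hq])⟩

theorem isUnit_of_intCast_mul_eq_one {d : ℤ} {y : 𝓞 K} (h : (d : 𝓞 K) * y = 1) :
    IsUnit d := by
  have hK : (d : K) * y = 1 := by simpa using congrArg (algebraMap (𝓞 K) K) h
  have hy : (y : K) ∈ (⊥ : IntermediateField ℚ K) :=
    IntermediateField.mem_bot.mpr ⟨(d : ℚ)⁻¹, by simp [eq_inv_of_mul_eq_one_right hK]⟩
  obtain ⟨z, rfl⟩ := exists_intCast_eq_of_coe_mem_bot hy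
  exact IsUnit.of_mul_eq_one z (by exact_mod_cast h)

theorem isCoprime_repr_one (e : Module.Basis (Fin 2) ℤ (𝓞 K)) :
    IsCoprime (e.repr 1 0) (e.repr 1 1) := by
  rw [← isRelPrime_iff_isCoprime]
  rintro d ⟨a, ha⟩ ⟨c, hc⟩
  refine isUnit_of_intCast_mul_eq_one (y := a • e 0 + c • e 1) ?_
  have h1 := (e.sum_repr 1).symm.trans (Fin.sum_univ_two _)
  rw [ha, hc] at h1
  rw [← zsmul_eq_mul, h1]
  module

theorem exists_basis_zero_eq_one [NumberField K] (hK : Module.finrank ℚ K = 2) :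
    ∃ b : Module.Basis (Fin 2) ℤ (𝓞 K), b 0 = 1 :=
  let e := Module.finBasisOfFinrankEq ℤ (𝓞 K) (RingOfIntegers.rank K ▸ hK)
  e.exists_basis_zero_eq_of_isCoprime (isCoprime_repr_one e)

theorem coe_sub_intCast_notMem_bot {ι : Type*} (b : Module.Basis ι ℤ (𝓞 K)) {i j : ι}
    (hij : i ≠ j) (hj : b j = 1) (k : ℤ) :
    ((b i - k : 𝓞 K) : K) ∉ (⊥ : IntermediateField ℚ K) := by
  intro h
  obtain ⟨z, hz⟩ := exists_intCast_eq_of_coe_mem_bot h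
  have hbi : b i = (z + k) • b j := by
    rw [hj, zsmul_one, Int.cast_add, ← hz, sub_add_cancel]
  have hrepr := congrArg (fun x => b.repr x i) hbi
  simp only [map_smul, b.repr_self, Finsupp.smul_apply, Finsupp.single_eq_same,
    Finsupp.single_eq_of_ne hij, smul_zero] at hrepr
  exact one_ne_zero hrepr

end NumberField.RingOfIntegers

theorem real_quadratic_small_integral_generator
    (K : Type*) [Field K] [NumberField K]
    (hdeg : Module.finrank ℚ K = 2)
    (hD : 0 < NumberField.discr K) :
    ∃ α : K, IsIntegral ℤ α ∧ ℚ⟮α⟯ = ⊤ ∧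
      ((max 1 (max |(minpoly ℤ α).coeff 1| |(minpoly ℤ α).coeff 0|) : ℤ) : ℝ) <
        Real.sqrt (NumberField.discr K : ℝ) := by
  obtain ⟨b, hb⟩ := RingOfIntegers.exists_basis_zero_eq_one hdeg
  obtain ⟨t, n, hθ⟩ := b.exists_sq_add_smul_add_smul_eq_zero hb
  have hdiscr : discr K = t ^ 2 - 4 * n := by
    rw [← NumberField.discr_eq_discr K b]
    exact Algebra.discr_of_basis_zero_eq_one b hb hθ
  obtain ⟨k, hB_nonneg, hB_le, hB_lt⟩ := Int.exists_nonneg_add_two_mul_sq_le_lt t hD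
  set α : K := algebraMap (𝓞 K) K (b 1 - k)
  have hα : α ∉ (⊥ : IntermediateField ℚ K) :=
    RingOfIntegers.coe_sub_intCast_notMem_bot b one_ne_zero hb k
  have hα_range : α ∉ (algebraMap ℤ K).range :=
    fun ⟨z, hz⟩ ↦ hα (hz ▸ intCast_mem _ z)
  have hα_root : aeval α (X ^ 2 + C (t + 2 * k) * X + C (n + t * k + k ^ 2)) = 0 := by
    rw [aeval_algebraMap_apply, ← map_zero (algebraMap (𝓞 K) K)]
    congr 1
    simp only [eq_intCast, map_add, map_mul, map_pow, map_ofNat, aeval_X, map_intCast]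
    rw [zsmul_eq_mul, zsmul_eq_mul] at hθ
    linear_combination hθ
  have hmin := minpoly.eq_X_sq_add_C_mul_X_add_C hα_range hα_root
  refine ⟨α, RingOfIntegers.isIntegral_coe _, adjoin_simple_eq_top_of_notMem_bot
    (hdeg ▸ Nat.prime_two) hα, ?_⟩
  rw [hmin, coeff_one_X_sq_add_C_mul_X_add_C, coeff_zero_X_sq_add_C_mul_X_add_C,
    Real.lt_sqrt (by positivity)]
  exact_mod_cast Int.max_one_max_abs_sq_lt hB_nonneg
    (ne_zero_of_aeval_X_sq_add_C_mul_X_add_C_eq_zero hα_range hα_root)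
    (by rw [hdiscr]; ring) hB_le hB_lt
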